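/- Under the Setup, let s be the orthogonal projection of A onto L₁ and let s' be the orthogonal projection of A onto L₁''. Then |ss'| = 2 and 2 < |sd| < 1 + |AC|, where d is the intersection point of L₁ with [BC] and |AC| is the length of the diagonal of ABCD. -/

import Mathlib

open Real

noncomputable section

/-- Points of the Euclidean plane. -/
abbrev Pt := EuclideanSpace ℝ (Fin 2)

/-- An axis-aligned rectangle (all sides of positive length, parallel to the axes),
given by the coordinates of its sides. -/
structure AARect where
  xmin : ℝ
  xmax : ℝ
  ymin : ℝ
  ymax : ℝ
  hx : xmin < xmax
  hy : ymin < ymax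

/-- The set of points of an axis-aligned rectangle. -/
def AARect.set (R : AARect) : Set Pt :=
  {q | q 0 ∈ Set.Icc R.xmin R.xmax ∧ q 1 ∈ Set.Icc R.ymin R.ymax}

/-- The center of an axis-aligned rectangle. -/
def AARect.center (R : AARect) : Pt :=
  !₂[(R.xmin + R.xmax) / 2, (R.ymin + R.ymax) / 2]

/-- The North-West vertex `A`. -/
def AARect.A (R : AARect) : Pt := !₂[R.xmin, R.ymax]

/-- The North-East vertex `B`. -/
def AARect.B (R : AARect) : Pt := !₂[R.xmax, R.ymax]

/-- The South-East vertex `C`. -/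
def AARect.C (R : AARect) : Pt := !₂[R.xmax, R.ymin]

/-- The South-West vertex `D`. -/
def AARect.D (R : AARect) : Pt := !₂[R.xmin, R.ymin]

/-- The line through the point `p` with direction vector `v`. -/
def lineThrough (p v : Pt) : Set Pt := {q | ∃ t : ℝ, q = p + t • v}

/-- The closed half-plane to the right (East) of the (non-vertical) line through `p` with
direction `v`: the set of points having, on that line, a point with the same second
coordinate and a smaller-or-equal first coordinate. -/
def rightOf (p v : Pt) : Set Pt :=
  {q | ∃ w ∈ lineThrough p v, w 1 = q 1 ∧ w 0 ≤ q 0}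

/-!
The projections `s`, `s'` of `A` onto the parallel lines `L₁`, `L₁''` differ exactly by the
normal offset `p' - p`, so `|ss'| = |pp'| = 2`. Since `s` is the foot of the perpendicular from
`A` and `a ∈ L₁`, Pythagoras gives `|sa| ≤ |Aa| < 1`, while `|ad|` lies between the width of the
rectangle (at least 4) and its diagonal `|AC|`. The triangle inequality through `a` then places
`|sd|` strictly between `3` and `1 + |AC|`.
-/

open scoped InnerProductSpace

section InnerProductSpace

variable {F : Type*} [NormedAddCommGroup F] [InnerProductSpace ℝ F]

theorem dist_le_of_inner_sub_sub_eq_zero {x y z : F} (h : ⟪x - y, y - z⟫_ℝ = 0) :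
    dist y z ≤ dist x z := by
  have hpyth := norm_add_sq_eq_norm_sq_add_norm_sq_real h
  rw [sub_add_sub_cancel] at hpyth
  rw [dist_eq_norm, dist_eq_norm, mul_self_le_mul_self_iff (norm_nonneg _) (norm_nonneg _)]
  nlinarith [mul_self_nonneg ‖x - y‖]

theorem smul_eq_zero_of_inner_add_smul_eq_zero {w v : F} {t : ℝ} (hw : ⟪w, v⟫_ℝ = 0)
    (h : ⟪w + t • v, v⟫_ℝ = 0) : t • v = 0 := by
  have hv : ⟪t • v, v⟫_ℝ = 0 := by rwa [inner_add_left, hw, zero_add] at h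
  rw [← inner_self_eq_zero (𝕜 := ℝ), inner_smul_right, hv, mul_zero]

end InnerProductSpace

theorem exists_sub_eq_add_smul_of_mem_lineThrough {p p' v q q' : Pt}
    (hq : q ∈ lineThrough p v) (hq' : q' ∈ lineThrough p' v) :
    ∃ t : ℝ, q' - q = p' - p + t • v := by
  obtain ⟨t, rfl⟩ := hq
  obtain ⟨t', rfl⟩ := hq'
  exact ⟨t' - t, by rw [sub_smul]; abel⟩

theorem dist_eq_of_inner_sub_eq_zero_of_mem_lineThrough {p p' v A s s' : Pt}
    (hpp' : ⟪p' - p, v⟫_ℝ = 0) (hs : s ∈ lineThrough p v) (hAs : ⟪A - s, v⟫_ℝ = 0)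
    (hs' : s' ∈ lineThrough p' v) (hAs' : ⟪A - s', v⟫_ℝ = 0) :
    dist s s' = dist p p' := by
  obtain ⟨t, ht⟩ := exists_sub_eq_add_smul_of_mem_lineThrough hs hs'
  have hss' : ⟪s' - s, v⟫_ℝ = 0 := by
    rw [← sub_sub_sub_cancel_left s s' A, inner_sub_left, hAs, hAs', sub_zero]
  rw [smul_eq_zero_of_inner_add_smul_eq_zero hpp' (ht ▸ hss'), add_zero] at ht
  rw [dist_comm, dist_eq_norm, ht, ← dist_eq_norm, dist_comm]

theorem dist_le_of_inner_sub_eq_zero_of_mem_lineThrough {p v A s a : Pt}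
    (hs : s ∈ lineThrough p v) (hAs : ⟪A - s, v⟫_ℝ = 0) (ha : a ∈ lineThrough p v) :
    dist s a ≤ dist A a := by
  obtain ⟨t, ht⟩ := exists_sub_eq_add_smul_of_mem_lineThrough hs ha
  rw [sub_self, zero_add] at ht
  apply dist_le_of_inner_sub_sub_eq_zero
  rw [← neg_sub a s, ht, inner_neg_right, inner_smul_right, hAs, mul_zero, neg_zero]

theorem AARect.dist_le_dist_A_C (R : AARect) {q q' : Pt} (hq : q ∈ R.set) (hq' : q' ∈ R.set) :
    dist q q' ≤ dist R.A R.C := by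
  obtain ⟨⟨hq0, hq0'⟩, ⟨hq1, hq1'⟩⟩ := hq
  obtain ⟨⟨hq'0, hq'0'⟩, ⟨hq'1, hq'1'⟩⟩ := hq'
  simp only [EuclideanSpace.dist_eq, Fin.sum_univ_two, Real.dist_eq, sq_abs, AARect.A, AARect.C,
    Matrix.cons_val_zero, Matrix.cons_val_one]
  gcongr √(?_ + ?_)
  · nlinarith
  · nlinarith

theorem dist_ss'_sd_general (R : AARect)
    (h4x : 4 ≤ R.xmax - R.xmin)
    (v : Pt)
    (a : Pt) (haL : a ∈ lineThrough R.center v)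
    (ha0 : a 0 = R.xmin) (ha1 : a 1 ∈ Set.Icc R.ymin R.ymax)
    (haA : dist R.A a < 1)
    (d : Pt)
    (hd0 : d 0 = R.xmax) (hd1 : d 1 ∈ Set.Icc R.ymin R.ymax)
    (p' : Pt) (hp'dist : dist R.center p' = 2)
    (hp'perp : (inner ℝ (p' - R.center) v : ℝ) = 0)
    (s : Pt) (hsL : s ∈ lineThrough R.center v)
    (hs : (inner ℝ (R.A - s) v : ℝ) = 0)
    (s' : Pt) (hs'L : s' ∈ lineThrough p' v)
    (hs' : (inner ℝ (R.A - s') v : ℝ) = 0) :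
    dist s s' = 2 ∧ 2 < dist s d ∧ dist s d < 1 + dist R.A R.C := by
  have hss' := dist_eq_of_inner_sub_eq_zero_of_mem_lineThrough hp'perp hsL hs hs'L hs'
  have hsa : dist s a < 1 :=
    (dist_le_of_inner_sub_eq_zero_of_mem_lineThrough hsL hs haL).trans_lt haA
  have hwidth : R.xmax - R.xmin ≤ dist a d := by
    have h := PiLp.dist_apply_le a d 0
    rwa [ha0, hd0, Real.dist_eq, abs_sub_comm, abs_of_pos (sub_pos.2 R.hx)] at h
  have hdiag : dist a d ≤ dist R.A R.C :=
    R.dist_le_dist_A_C ⟨⟨ha0.ge, ha0.trans_le R.hx.le⟩, ha1⟩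
      ⟨⟨R.hx.le.trans hd0.ge, hd0.le⟩, hd1⟩
  refine ⟨hss'.trans hp'dist, ?_, ?_⟩
  · linarith [dist_triangle a s d, dist_comm a s]
  · linarith [dist_triangle s a d]

/-- Setup: `R = ABCD` is an axis-aligned rectangle with all sides of length at least 4 and
center `p`; `L₁` is the line through `p` with direction `v` of negative slope, meeting
`[AD]` at `a` and `[BC]` at `d`, with `|Aa| < 1`; `p'` is the point at distance 2 from `p`
on the perpendicular to `L₁` through `p`, on the side of `L₁` to the right of `L₁`;
`L₁''` is the line through `p'` parallel to `L₁`. If `s` is the orthogonal projection of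
`A` onto `L₁` and `s'` the orthogonal projection of `A` onto `L₁''`, then `|ss'| = 2` and
`2 < |sd| < 1 + |AC|`. -/
theorem dist_ss'_sd (R : AARect)
    (h4x : 4 ≤ R.xmax - R.xmin) (h4y : 4 ≤ R.ymax - R.ymin)
    (v : Pt) (hv : v 0 * v 1 < 0)
    (a : Pt) (haL : a ∈ lineThrough R.center v)
    (ha0 : a 0 = R.xmin) (ha1 : a 1 ∈ Set.Icc R.ymin R.ymax)
    (haA : dist R.A a < 1)
    (d : Pt) (hdL : d ∈ lineThrough R.center v)
    (hd0 : d 0 = R.xmax) (hd1 : d 1 ∈ Set.Icc R.ymin R.ymax)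
    (p' : Pt) (hp'dist : dist R.center p' = 2)
    (hp'perp : (inner ℝ (p' - R.center) v : ℝ) = 0)
    (hp'side : p' ∈ rightOf R.center v)
    (s : Pt) (hsL : s ∈ lineThrough R.center v)
    (hs : (inner ℝ (R.A - s) v : ℝ) = 0)
    (s' : Pt) (hs'L : s' ∈ lineThrough p' v)
    (hs' : (inner ℝ (R.A - s') v : ℝ) = 0) :
    dist s s' = 2 ∧ 2 < dist s d ∧ dist s d < 1 + dist R.A R.C :=
  dist_ss'_sd_general R h4x v a haL ha0 ha1 haA d hd0 hd1 p' hp'dist hp'perp s hsL hs s' hs'L hs'
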